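/- Let c be a 2-coloring of the edges of the hypercube Q_n such that the component graph Comp(Q_n,c) is acyclic (a tree). Then there exists a vertex u of Q_n and a monochromatic walk in Q_n from u to its antipodal pair. -/

import Mathlib

/-!
Suppose no vertex lies in the same monochromatic component as its antipode. For a component
`x`, the components met by the antipodes of the vertices of `x` then differ from `x`, and they are
linked to one another in `Comp(Q_n, c)` without passing through `x` (map a monochromatic walk
inside `x` by the antipodal map). In the tree `Comp(Q_n, c)` they therefore all lie behind a single
neighbour `f x` of `x`. Counting edges, a map on a finite tree sending every vertex to a neighbour
reverses some edge: `f (f x) = x`. For a vertex `u` common to `x` and `y = f x`, the components of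
the antipode of `u` then lie behind `y` as seen from `x` and behind `x` as seen from `y`,
which is impossible since the edge `xy` is a bridge.
-/

open SimpleGraph

variable {V : Type*}

/-- The spanning subgraph of `G` consisting of the edges of color `t`. -/
def monoSubgraph (G : SimpleGraph V) (c : Sym2 V → Bool) (t : Bool) : SimpleGraph V where
  Adj u v := G.Adj u v ∧ c s(u, v) = t
  symm := ⟨fun u v h => ⟨h.1.symm, by rw [Sym2.eq_swap]; exact h.2⟩⟩
  loopless := ⟨fun u h => G.loopless.irrefl u h.1⟩

/-- A monochromatic component of `(G, c)`: a color together with a connected component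
of the spanning subgraph of edges of that color. -/
abbrev MonoComp (G : SimpleGraph V) (c : Sym2 V → Bool) :=
  Σ t : Bool, (monoSubgraph G c t).ConnectedComponent

/-- The vertex `x` belongs to the monochromatic component `a`. -/
def MonoComp.Mem {G : SimpleGraph V} {c : Sym2 V → Bool} (a : MonoComp G c) (x : V) : Prop :=
  (monoSubgraph G c a.1).connectedComponentMk x = a.2

/-- The component graph `Comp(G, c)`: vertices are the monochromatic components,
two of them adjacent iff they are distinct and share a vertex of `G`. -/
def compGraph (G : SimpleGraph V) (c : Sym2 V → Bool) : SimpleGraph (MonoComp G c) where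
  Adj a b := a ≠ b ∧ ∃ x : V, a.Mem x ∧ b.Mem x
  symm := ⟨fun a b h => ⟨h.1.symm, h.2.imp fun x hx => ⟨hx.2, hx.1⟩⟩⟩
  loopless := ⟨fun a h => h.1 rfl⟩

/-- The number of color changes along a list of edges: the number of consecutive
pairs receiving different colors. -/
def colorChanges (c : Sym2 V → Bool) : List (Sym2 V) → ℕ
  | e₁ :: e₂ :: rest => (if c e₁ = c e₂ then 0 else 1) + colorChanges c (e₂ :: rest)
  | _ => 0

/-- The hypercube graph `Q n`: vertices are `Fin n → Bool`, two vertices adjacent iff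
they differ in exactly one coordinate. -/
def cubeGraph (n : ℕ) : SimpleGraph (Fin n → Bool) where
  Adj u v := hammingDist u v = 1
  symm := ⟨fun u v h => by rwa [hammingDist_comm]⟩
  loopless := ⟨fun u h => by
    simp only [hammingDist_self] at h; exact absurd h (by norm_num)⟩

/-- The antipodal pair of a vertex of the hypercube. -/
def antipode {n : ℕ} (u : Fin n → Bool) : Fin n → Bool := fun i => !(u i)

namespace SimpleGraph

variable {G : SimpleGraph V}

theorem IsTree.exists_apply_apply_eq_self [Finite V] (hG : G.IsTree) {f : V → V}
    (hf : ∀ x, G.Adj x (f x)) : ∃ x, f (f x) = x := by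
  by_contra! hff
  have hinj : Function.Injective fun x => (⟨s(x, f x), hf x⟩ : G.edgeSet) := by
    intro x y hxy
    rcases Sym2.eq_iff.mp (Subtype.ext_iff.mp hxy) with ⟨hxy, -⟩ | ⟨hx, hy⟩
    · exact hxy
    · exact absurd (by rw [hy, ← hx]) (hff x)
  have hcard := (isTree_iff_connected_and_card.mp hG).2
  have : Nat.card V ≤ Nat.card G.edgeSet := Nat.card_le_card_of_injective _ hinj
  omega

theorem Walk.exists_adj_reachable_deleteIncidenceSet {x p : V} (W : G.Walk p x) (hp : p ≠ x) :
    ∃ y, G.Adj x y ∧ (G.deleteIncidenceSet x).Reachable y p := by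
  induction W with
  | nil => exact absurd rfl hp
  | @cons p w x hpw W ih =>
    by_cases hw : w = x
    · subst hw
      exact ⟨p, hpw.symm, .rfl⟩
    · obtain ⟨y, hxy, hyw⟩ := ih hw
      exact ⟨y, hxy, hyw.trans (deleteIncidenceSet_adj.mpr ⟨hpw.symm, hw, hp⟩).reachable⟩

/-- Both reachabilities avoid the edge `xy`, which is a bridge. -/
theorem IsAcyclic.not_reachable_deleteIncidenceSet (hG : G.IsAcyclic) {x y p : V}
    (hxy : G.Adj x y) (hy : (G.deleteIncidenceSet x).Reachable y p) :
    ¬ (G.deleteIncidenceSet y).Reachable x p := by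
  intro hx
  have hle : ∀ z ∈ ({x, y} : Set V), G.deleteIncidenceSet z ≤ G.deleteEdges {s(x, y)} := by
    intro z hz a b hab
    rw [deleteIncidenceSet_adj] at hab
    simp only [deleteEdges_adj, Set.mem_singleton_iff, Sym2.eq_iff]
    grind
  exact isBridge_iff.mp (isAcyclic_iff_forall_adj_isBridge.mp hG hxy)
    ((hx.mono (hle y (by simp))).trans (hy.mono (hle x (by simp))).symm)

end SimpleGraph

namespace MonoComp

variable {G : SimpleGraph V} {c : Sym2 V → Bool}

def of (t : Bool) (v : V) : MonoComp G c := ⟨t, (monoSubgraph G c t).connectedComponentMk v⟩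

theorem mem_of (t : Bool) (v : V) : (of t v : MonoComp G c).Mem v := rfl

theorem Mem.of_eq {x : MonoComp G c} {v : V} (h : x.Mem v) : of x.1 v = x :=
  congrArg (Sigma.mk x.1) h

theorem mem_of_of_eq {x : MonoComp G c} {t : Bool} {v : V} (h : of t v = x) : x.Mem v :=
  h ▸ mem_of t v

theorem exists_mem (x : MonoComp G c) : ∃ v, x.Mem v := ⟨x.2.out, x.2.out_eq⟩

theorem of_eq_of_adj {a b : V} (h : G.Adj a b) :
    (of (c s(a, b)) a : MonoComp G c) = of (c s(a, b)) b :=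
  congrArg (Sigma.mk _) <|
    ConnectedComponent.sound (Adj.reachable (G := monoSubgraph G c _) ⟨h, rfl⟩)

theorem Mem.reachable {x : MonoComp G c} {u v : V} (hu : x.Mem u) (hv : x.Mem v) :
    (monoSubgraph G c x.1).Reachable u v :=
  ConnectedComponent.exact (hu.trans hv.symm)

theorem Mem.of_reachable {x : MonoComp G c} {u v : V} (hu : x.Mem u)
    (huv : (monoSubgraph G c x.1).Reachable u v) : x.Mem v :=
  (ConnectedComponent.sound huv).symm.trans hu

theorem reachable_of_of {H : SimpleGraph (MonoComp G c)} {v : V}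
    (h : H.Reachable (of false v) (of true v)) (s t : Bool) : H.Reachable (of s v) (of t v) := by
  cases s <;> cases t
  exacts [.rfl, h, h.symm, .rfl]

theorem reachable_of_walk (H : SimpleGraph (MonoComp G c)) {a b : V} (W : G.Walk a b)
    (hW : ∀ v ∈ W.support, H.Reachable (of false v) (of true v)) (s t : Bool) :
    H.Reachable (of s a) (of t b) := by
  induction W generalizing s with
  | nil => exact reachable_of_of (hW _ (by simp)) s t
  | @cons a w b hab W ih =>
    refine (reachable_of_of (hW a (by simp)) s (c s(a, w))).trans ?_
    rw [of_eq_of_adj hab]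
    exact ih (fun v hv => hW v (by simp [hv])) _

end MonoComp

open MonoComp

section ComponentGraph

variable {G : SimpleGraph V} {c : Sym2 V → Bool}

theorem monoSubgraph_le (t : Bool) : monoSubgraph G c t ≤ G := fun _ _ h => h.1

theorem exists_walk_of_monoSubgraph_reachable {t : Bool} {u v : V}
    (h : (monoSubgraph G c t).Reachable u v) : ∃ w : G.Walk u v, ∀ e ∈ w.edges, c e = t := by
  obtain ⟨W⟩ := h
  refine ⟨W.mapLe (monoSubgraph_le t), fun e he => ?_⟩
  rw [Walk.edges_mapLe_eq_edges] at he
  induction e using Sym2.ind with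
  | _ a b => exact (W.edges_subset_edgeSet he).2

theorem compGraph_adj_of {s t : Bool} (hst : s ≠ t) (v : V) :
    (compGraph G c).Adj (of s v) (of t v) :=
  ⟨fun h => hst (congrArg Sigma.fst h), v, mem_of s v, mem_of t v⟩

theorem compGraph_connected (hG : G.Connected) : (compGraph G c).Connected := by
  have : Nonempty (MonoComp G c) := ⟨of true hG.nonempty.some⟩
  refine ⟨fun x y => ?_⟩
  obtain ⟨u, hu⟩ := x.exists_mem
  obtain ⟨v, hv⟩ := y.exists_mem
  rw [← hu.of_eq, ← hv.of_eq]
  exact reachable_of_walk _ (hG u v).some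
    (fun w _ => (compGraph_adj_of Bool.false_ne_true w).reachable) _ _

end ComponentGraph

section SelfMap

variable {G : SimpleGraph V} {c : Sym2 V → Bool} (σ : G →g G)
  (hσ : ∀ u t, ¬ (monoSubgraph G c t).Reachable u (σ u))
include hσ

theorem MonoComp.Mem.notMem_map {x : MonoComp G c} {u : V} (hu : x.Mem u) : ¬ x.Mem (σ u) :=
  fun hσu => hσ u x.1 (hu.reachable hσu)

/-- Map a monochromatic walk inside `x` by `σ`; no vertex of the image lies in `x`. -/
theorem MonoComp.Mem.reachable_deleteIncidenceSet_map {x : MonoComp G c} {u v : V}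
    (hu : x.Mem u) (hv : x.Mem v) (s t : Bool) :
    ((compGraph G c).deleteIncidenceSet x).Reachable (of s (σ u)) (of t (σ v)) := by
  obtain ⟨W⟩ := hu.reachable hv
  refine reachable_of_walk _ ((W.mapLe (monoSubgraph_le _)).map σ) (fun w hw => ?_) s t
  rw [Walk.support_map, Walk.support_mapLe_eq_support, List.mem_map] at hw
  obtain ⟨w, hw, rfl⟩ := hw
  obtain ⟨W₁, -, -⟩ := W.mem_support_iff_exists_append.mp hw
  have hσw : ¬ x.Mem (σ w) := (hu.of_reachable W₁.reachable).notMem_map σ hσ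
  refine (deleteIncidenceSet_adj.mpr ⟨compGraph_adj_of Bool.false_ne_true _, ?_, ?_⟩).reachable
  all_goals exact fun h => hσw (mem_of_of_eq h)

theorem MonoComp.exists_adj_forall_reachable_deleteIncidenceSet (hG : G.Connected)
    (x : MonoComp G c) : ∃ y, (compGraph G c).Adj x y ∧
      ∀ u, x.Mem u → ((compGraph G c).deleteIncidenceSet x).Reachable y (of true (σ u)) := by
  obtain ⟨u₀, hu₀⟩ := x.exists_mem
  have hne : of true (σ u₀) ≠ x := fun h => hu₀.notMem_map σ hσ (mem_of_of_eq h)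
  obtain ⟨y, hxy, hy⟩ :=
    ((compGraph_connected hG).preconnected _ x).some.exists_adj_reachable_deleteIncidenceSet hne
  exact ⟨y, hxy, fun u hu => hy.trans (hu₀.reachable_deleteIncidenceSet_map σ hσ hu true true)⟩

end SelfMap

theorem exists_reachable_monoSubgraph_map_of_isAcyclic [Finite V] {G : SimpleGraph V}
    {c : Sym2 V → Bool} (hG : G.Connected) (σ : G →g G) (hc : (compGraph G c).IsAcyclic) :
    ∃ u t, (monoSubgraph G c t).Reachable u (σ u) := by
  by_contra! hσ
  choose f hf hreach using exists_adj_forall_reachable_deleteIncidenceSet σ hσ hG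
  obtain ⟨x, hx⟩ := (IsTree.mk (compGraph_connected hG) hc).exists_apply_apply_eq_self hf
  obtain ⟨-, u, hxu, hyu⟩ := hf x
  have hback := hreach (f x) u hyu
  rw [hx] at hback
  exact hc.not_reachable_deleteIncidenceSet (hf x) (hreach x u hxu) hback

section Cube

variable {n : ℕ}

theorem cubeGraph_adj_antipode {u v : Fin n → Bool} (h : (cubeGraph n).Adj u v) :
    (cubeGraph n).Adj (antipode u) (antipode v) :=
  (hammingDist_comp (fun _ => not) (fun _ => Bool.not_injective)).trans h

def antipodeHom : cubeGraph n →g cubeGraph n := ⟨antipode, cubeGraph_adj_antipode⟩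

theorem cubeGraph_reachable_update (u : Fin n → Bool) (i : Fin n) (b : Bool) :
    (cubeGraph n).Reachable u (Function.update u i b) := by
  by_cases hb : b = u i
  · rw [hb, Function.update_eq_self]
  refine Adj.reachable (Finset.card_eq_one.mpr ⟨i, ?_⟩)
  ext j
  by_cases hj : j = i
  · subst hj; simp [Ne.symm hb]
  · simp [hj]

theorem cubeGraph_connected : (cubeGraph n).Connected := by
  classical
  refine ⟨fun u v => ?_⟩
  have key : ∀ s : Finset (Fin n), (cubeGraph n).Reachable u (s.piecewise v u) := by
    intro s
    induction s using Finset.induction_on with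
    | empty => rw [Finset.piecewise_empty]
    | insert i s _ ih =>
      rw [Finset.piecewise_insert]
      exact ih.trans (cubeGraph_reachable_update _ i _)
  simpa using key Finset.univ

end Cube

/-- If the component graph of a 2-colored hypercube is acyclic
(a tree), then some vertex is joined to its antipodal pair by a monochromatic walk. -/
theorem exists_monochromatic_antipodal_walk_of_acyclic
    {n : ℕ} (c : Sym2 (Fin n → Bool) → Bool)
    (hc : (compGraph (cubeGraph n) c).IsAcyclic) :
    ∃ (u : Fin n → Bool) (w : (cubeGraph n).Walk u (antipode u)) (t : Bool),
      ∀ e ∈ w.edges, c e = t := by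
  obtain ⟨u, t, hu⟩ :=
    exists_reachable_monoSubgraph_map_of_isAcyclic cubeGraph_connected antipodeHom hc
  obtain ⟨w, hw⟩ := exists_walk_of_monoSubgraph_reachable hu
  exact ⟨u, w, t, hw⟩
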